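/- arXiv:1012.0129 — 2 statements merged into one kernel-verified Lean document; each statement's English description precedes it below -/
import Mathlib

section
/- Let G be a finite abelian group isomorphic to ℤ_{n_1} ⊕ … ⊕ ℤ_{n_k}, where k ≥ 1, each n_i ≥ 2, and n_{i+1} divides n_i for all 1 ≤ i ≤ k−1. If G is S_2-capable, then k ≥ 3 and n_1 = n_2 = n_3. -/
/-- The commutator `[a,b] = a⁻¹ * b⁻¹ * a * b`. -/
def pcomm {E : Type} [Group E] (a b : E) : E := a⁻¹ * b⁻¹ * a * b

/-- The word `w(x,y,z,u) = [[x,y],[z,u]]` defining the variety `S_2` of metabelian groups. -/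
def metaW {E : Type} [Group E] (x y z u : E) : E := pcomm (pcomm x y) (pcomm z u)

/-- The marginal set of a group `E` with respect to the variety `S_2` of metabelian
groups: all `a ∈ E` such that replacing any one argument `g` of `w` by `g * a`
leaves the value of `w` unchanged. -/
def s2MarginalSet (E : Type) [Group E] : Set E :=
  {a : E | ∀ x y z u : E,
    metaW (x * a) y z u = metaW x y z u ∧
    metaW x (y * a) z u = metaW x y z u ∧
    metaW x y (z * a) u = metaW x y z u ∧
    metaW x y z (u * a) = metaW x y z u}

/-- `G` is `S_2`-capable if `G ≅ E / V*(E)` for some group `E`, where `V*(E)` is the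
marginal (normal) subgroup of `E` with respect to the variety of metabelian groups,
i.e. the normal subgroup whose underlying set is `s2MarginalSet E`. -/
def IsS2Capable (G : Type) [Group G] : Prop :=
  ∃ (E : Type) (_ : Group E) (H : Subgroup E) (_ : H.Normal),
    (H : Set E) = s2MarginalSet E ∧ Nonempty (G ≃* E ⧸ H)

/-!
If `E ⧸ V*(E) ≅ G` is abelian, every commutator of `E` is marginal. Then `w` takes central
values, is multiplicative in each argument, vanishes as soon as one argument is marginal, and
vanishes on any quadruple drawn from a two-element set. So marginality of an element `a` can be
tested against lifts `t j` of the standard generators of `G`, and `t i ^ d` is marginal as soon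
as `t j ^ d` is for every `j` outside a pair `{i, i'}`. With `d = 1` this makes `G` trivial when
`k ≤ 2`; with `d = n 1`, `i = i' = 0` it gives `n 0 ∣ n 1`; with `d = n 2`, `{i, i'} = {1, 0}` it
gives `n 1 ∣ n 2`.
-/

section Identities

variable {E : Type} [Group E]

theorem metaW_swap (x y z u : E) : metaW x y z u = (metaW z u x y)⁻¹ := by
  unfold metaW pcomm; group

theorem inv_mul_metaW_mul (x y z u g : E) : g⁻¹ * metaW x y z u * g =
    metaW (x * pcomm x g) (y * pcomm y g) (z * pcomm z g) (u * pcomm u g) := by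
  unfold metaW pcomm; group

theorem pcomm_mul_left_of_mem_center {p d : E} (h : pcomm p d ∈ Subgroup.center E) (q : E) :
    pcomm (p * q) d = pcomm p d * pcomm q d := by
  have hq : q⁻¹ * pcomm p d * q = pcomm p d := by
    rw [mul_assoc, ← Subgroup.mem_center_iff.mp h q, inv_mul_cancel_left]
  calc pcomm (p * q) d = q⁻¹ * pcomm p d * q * pcomm q d := by unfold pcomm; group
    _ = pcomm p d * pcomm q d := by rw [hq]

theorem metaW_eq_one_of_mem_pair {a b x y z u : E} (hx : x ∈ ({a, b} : Set E))
    (hy : y ∈ ({a, b} : Set E)) (hz : z ∈ ({a, b} : Set E)) (hu : u ∈ ({a, b} : Set E)) :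
    metaW x y z u = 1 := by
  rcases hx with rfl | rfl <;> rcases hy with rfl | rfl <;> rcases hz with rfl | rfl <;>
    rcases hu with rfl | rfl <;> (unfold metaW pcomm; group)

end Identities

section Marginal

variable {E : Type} [Group E] {a : E}

theorem metaW_eq_one_of_mem₁ (ha : a ∈ s2MarginalSet E) (y z u : E) : metaW a y z u = 1 := by
  simpa only [one_mul] using (ha 1 y z u).1.trans (by unfold metaW pcomm; group)

theorem metaW_eq_one_of_mem₂ (ha : a ∈ s2MarginalSet E) (x z u : E) : metaW x a z u = 1 := by
  simpa only [one_mul] using (ha x 1 z u).2.1.trans (by unfold metaW pcomm; group)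

theorem metaW_eq_one_of_mem₃ (ha : a ∈ s2MarginalSet E) (x y u : E) : metaW x y a u = 1 := by
  simpa only [one_mul] using (ha x y 1 u).2.2.1.trans (by unfold metaW pcomm; group)

theorem metaW_eq_one_of_mem₄ (ha : a ∈ s2MarginalSet E) (x y z : E) : metaW x y z a = 1 := by
  simpa only [one_mul] using (ha x y z 1).2.2.2.trans (by unfold metaW pcomm; group)

end Marginal

theorem eq_one_of_closure_eq_top {G M : Type} [Group G] [Group M] {S : Set G}
    (hS : Subgroup.closure S = ⊤) {f : G → M} (hf : ∀ a b, f (a * b) = f a * f b)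
    (h : ∀ s ∈ S, f s = 1) (x : G) : f x = 1 :=
  DFunLike.congr_fun (MonoidHom.eq_of_eqOn_dense hS (f := MonoidHom.mk' f hf) (g := 1) h) x

section MarginalCommutators

variable {E : Type} [Group E] (hcomm : ∀ x y : E, pcomm x y ∈ s2MarginalSet E)
include hcomm

theorem metaW_mem_center (x y z u : E) : metaW x y z u ∈ Subgroup.center E := by
  refine Subgroup.mem_center_iff.mpr fun g => ?_
  have hconj := inv_mul_metaW_mul x y z u g
  rw [(hcomm x g _ _ _ _).1, (hcomm y g _ _ _ _).2.1, (hcomm z g _ _ _ _).2.2.1,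
    (hcomm u g _ _ _ _).2.2.2] at hconj
  nth_rewrite 1 [← hconj]; group

theorem metaW_mul₁ (x x' y z u : E) :
    metaW (x * x') y z u = metaW x y z u * metaW x' y z u := by
  have hc : pcomm (x * x') y = pcomm x y * pcomm (pcomm x y) x' * pcomm x' y := by
    unfold pcomm; group
  have hc' : pcomm (pcomm x y * pcomm (pcomm x y) x') (pcomm z u) = metaW x y z u := by
    rw [pcomm_mul_left_of_mem_center (metaW_mem_center hcomm x y z u)]
    change metaW x y z u * metaW (pcomm x y) x' z u = _
    rw [metaW_eq_one_of_mem₁ (hcomm x y) x' z u, mul_one]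
  rw [metaW, hc, pcomm_mul_left_of_mem_center (by rw [hc']; exact metaW_mem_center hcomm x y z u),
    hc']
  rfl

theorem metaW_comm₁₂ (x y z u : E) : metaW y x z u = (metaW x y z u)⁻¹ := by
  refine eq_inv_of_mul_eq_one_left ?_
  calc metaW y x z u * metaW x y z u = pcomm (pcomm y x * pcomm x y) (pcomm z u) :=
        (pcomm_mul_left_of_mem_center (metaW_mem_center hcomm y x z u) _).symm
    _ = 1 := by unfold pcomm; group

theorem metaW_mul₂ (x y y' z u : E) :
    metaW x (y * y') z u = metaW x y z u * metaW x y' z u := by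
  rw [← inv_inv (metaW x (y * y') z u), ← metaW_comm₁₂ hcomm, metaW_mul₁ hcomm, mul_inv_rev,
    ← metaW_comm₁₂ hcomm, ← metaW_comm₁₂ hcomm,
    ← Subgroup.mem_center_iff.mp (metaW_mem_center hcomm x y z u)]

theorem metaW_mul₃ (x y z z' u : E) :
    metaW x y (z * z') u = metaW x y z u * metaW x y z' u := by
  rw [metaW_swap x y, metaW_mul₁ hcomm, mul_inv_rev, ← metaW_swap, ← metaW_swap,
    ← Subgroup.mem_center_iff.mp (metaW_mem_center hcomm x y z u)]

theorem metaW_mul₄ (x y z u u' : E) :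
    metaW x y z (u * u') = metaW x y z u * metaW x y z u' := by
  rw [metaW_swap x y, metaW_mul₂ hcomm, mul_inv_rev, ← metaW_swap, ← metaW_swap,
    ← Subgroup.mem_center_iff.mp (metaW_mem_center hcomm x y z u)]

theorem metaW_pow₁ (x y z u : E) (d : ℕ) : metaW (x ^ d) y z u = metaW x y z u ^ d :=
  map_pow (MonoidHom.mk' (metaW · y z u) fun x x' => metaW_mul₁ hcomm x x' y z u) x d

theorem metaW_pow₂ (x y z u : E) (d : ℕ) : metaW x (y ^ d) z u = metaW x y z u ^ d :=
  map_pow (MonoidHom.mk' (metaW x · z u) fun y y' => metaW_mul₂ hcomm x y y' z u) y d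

theorem metaW_pow₃ (x y z u : E) (d : ℕ) : metaW x y (z ^ d) u = metaW x y z u ^ d :=
  map_pow (MonoidHom.mk' (metaW x y · u) fun z z' => metaW_mul₃ hcomm x y z z' u) z d

theorem metaW_pow₄ (x y z u : E) (d : ℕ) : metaW x y z (u ^ d) = metaW x y z u ^ d :=
  map_pow (MonoidHom.mk' (metaW x y z ·) fun u u' => metaW_mul₄ hcomm x y z u u') u d

theorem mem_s2MarginalSet_of_forall_metaW_eq_one {a : E}
    (h : ∀ y z u : E, metaW a y z u = 1) : a ∈ s2MarginalSet E := by
  intro x y z u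
  refine ⟨?_, ?_, ?_, ?_⟩
  · rw [metaW_mul₁ hcomm, h, mul_one]
  · rw [metaW_mul₂ hcomm, ← inv_inv (metaW x a z u), ← metaW_comm₁₂ hcomm, h, inv_one, mul_one]
  · rw [metaW_mul₃ hcomm, metaW_swap x y a, h, inv_one, mul_one]
  · rw [metaW_mul₄ hcomm, metaW_swap x y z a, ← inv_inv (metaW z a x y), ← metaW_comm₁₂ hcomm, h,
      inv_one, inv_one, mul_one]

theorem mem_s2MarginalSet_of_closure {S : Set E}
    (hS : Subgroup.closure (S ∪ s2MarginalSet E) = ⊤) {a : E}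
    (h : ∀ y ∈ S, ∀ z ∈ S, ∀ u ∈ S, metaW a y z u = 1) : a ∈ s2MarginalSet E := by
  have h₄ : ∀ y ∈ S, ∀ z ∈ S, ∀ u, metaW a y z u = 1 := fun y hy z hz =>
    eq_one_of_closure_eq_top hS (metaW_mul₄ hcomm a y z) <| by
      rintro u (hu | hu)
      exacts [h y hy z hz u hu, metaW_eq_one_of_mem₄ hu a y z]
  have h₃ : ∀ y ∈ S, ∀ z u, metaW a y z u = 1 := fun y hy z u =>
    eq_one_of_closure_eq_top hS (f := (metaW a y · u)) (metaW_mul₃ hcomm a y · · u) (by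
      rintro z (hz | hz)
      exacts [h₄ y hy z hz u, metaW_eq_one_of_mem₃ hz a y u]) z
  have h₂ : ∀ y z u, metaW a y z u = 1 := fun y z u =>
    eq_one_of_closure_eq_top hS (f := (metaW a · z u)) (metaW_mul₂ hcomm a · · z u) (by
      rintro y (hy | hy)
      exacts [h₃ y hy z u, metaW_eq_one_of_mem₂ hy a z u]) y
  exact mem_s2MarginalSet_of_forall_metaW_eq_one hcomm h₂

theorem pow_mem_s2MarginalSet {S : Set E}
    (hS : Subgroup.closure (S ∪ s2MarginalSet E) = ⊤) {a b : E} {d : ℕ}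
    (hSd : ∀ s ∈ S, s ^ d ∈ s2MarginalSet E ∨ s ∈ ({a, b} : Set E)) :
    a ^ d ∈ s2MarginalSet E := by
  refine mem_s2MarginalSet_of_closure hcomm hS fun y hy z hz u hu => ?_
  rw [metaW_pow₁ hcomm]
  rcases hSd y hy with hy' | hy'
  · rw [← metaW_pow₂ hcomm, metaW_eq_one_of_mem₂ hy']
  rcases hSd z hz with hz' | hz'
  · rw [← metaW_pow₃ hcomm, metaW_eq_one_of_mem₃ hz']
  rcases hSd u hu with hu' | hu'
  · rw [← metaW_pow₄ hcomm, metaW_eq_one_of_mem₄ hu']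
  rw [metaW_eq_one_of_mem_pair (.inl rfl) hy' hz' hu', one_pow]

end MarginalCommutators

section ZModPi

variable {ι : Type} [DecidableEq ι] (n : ι → ℕ)

theorem ofAdd_single_one_pow_eq_one_iff (i : ι) (m : ℕ) :
    Multiplicative.ofAdd (Pi.single i 1 : (j : ι) → ZMod (n j)) ^ m = 1 ↔ n i ∣ m := by
  rw [← ofAdd_nsmul, ← ofAdd_zero, Multiplicative.ofAdd.apply_eq_iff_eq, ← Pi.single_smul,
    nsmul_one, Pi.single_eq_zero_iff, ZMod.natCast_eq_zero_iff]

theorem closure_range_ofAdd_single_one [Fintype ι] :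
    Subgroup.closure (Set.range fun i =>
      Multiplicative.ofAdd (Pi.single i 1 : (j : ι) → ZMod (n j))) = ⊤ := by
  refine eq_top_iff.mpr fun g _ => ?_
  have hg : g = ∏ i, Multiplicative.ofAdd (Pi.single i 1 : (j : ι) → ZMod (n j)) ^
      ((Multiplicative.toAdd g i).cast : ℤ) := by
    apply Multiplicative.toAdd.injective
    simp [toAdd_prod, ← Pi.single_smul, Finset.univ_sum_single]
  rw [hg]
  exact Subgroup.prod_mem _ fun i _ =>
    Subgroup.zpow_mem _ (Subgroup.subset_closure (Set.mem_range_self i)) _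

end ZModPi

section Quotient

variable {E : Type} [Group E] {H : Subgroup E} [H.Normal]

theorem pcomm_mem_of_mulEquiv_quotient {A : Type} [CommGroup A] (e : A ≃* E ⧸ H) (x y : E) :
    pcomm x y ∈ H := by
  have hc : Commute (x : E ⧸ H) y := by simpa using (Commute.all (e.symm x) (e.symm y)).map e
  rw [← QuotientGroup.eq_one_iff]
  change pcomm (x : E ⧸ H) y = 1
  unfold pcomm
  rw [mul_assoc, hc.eq]
  group

theorem closure_union_eq_top_of_closure_image_mk {S : Set E}
    (hS : Subgroup.closure ((↑) '' S : Set (E ⧸ H)) = ⊤) : Subgroup.closure (S ∪ H) = ⊤ := by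
  rw [Subgroup.closure_union, Subgroup.closure_eq, ← QuotientGroup.ker_mk' H,
    ← Subgroup.comap_map_eq, MonoidHom.map_closure, QuotientGroup.coe_mk', hS, Subgroup.comap_top]

theorem exists_lifts_of_mulEquiv_quotient {ι : Type} [Fintype ι] [DecidableEq ι] {n : ι → ℕ}
    (e : Multiplicative ((i : ι) → ZMod (n i)) ≃* E ⧸ H) :
    ∃ t : ι → E, Subgroup.closure (Set.range t ∪ H) = ⊤ ∧ ∀ i m, t i ^ m ∈ H ↔ n i ∣ m := by
  set g : ι → Multiplicative ((i : ι) → ZMod (n i)) := fun i =>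
    Multiplicative.ofAdd (Pi.single i 1)
  refine ⟨fun i => (e (g i)).out, closure_union_eq_top_of_closure_image_mk ?_, fun i m => ?_⟩
  · rw [← Set.range_comp]
    simp only [Function.comp_def, QuotientGroup.out_eq']
    rw [Set.range_comp' e g, ← MonoidHom.coe_coe, ← MonoidHom.map_closure,
      closure_range_ofAdd_single_one, Subgroup.map_top_of_surjective _ e.surjective]
  · rw [← QuotientGroup.eq_one_iff, QuotientGroup.mk_pow, QuotientGroup.out_eq', ← map_pow,
      map_eq_one_iff e e.injective, ofAdd_single_one_pow_eq_one_iff]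

end Quotient

theorem dvd_of_forall_dvd_of_ne_of_ne {E : Type} [Group E] {H : Subgroup E}
    (hH : (H : Set E) = s2MarginalSet E) (hcomm : ∀ x y : E, pcomm x y ∈ H)
    {ι : Type} {n : ι → ℕ} {t : ι → E} (hgen : Subgroup.closure (Set.range t ∪ H) = ⊤)
    (hord : ∀ i m, t i ^ m ∈ H ↔ n i ∣ m) {i i' : ι} {d : ℕ}
    (h : ∀ j, j ≠ i → j ≠ i' → n j ∣ d) : n i ∣ d := by
  rw [hH] at hgen
  simp only [← SetLike.mem_coe, hH] at hcomm hord
  rw [← hord]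
  refine pow_mem_s2MarginalSet hcomm hgen (b := t i') ?_
  rintro _ ⟨j, rfl⟩
  by_cases hji : j = i
  · exact .inr (.inl (congrArg t hji))
  by_cases hji' : j = i'
  · exact .inr (.inr (congrArg t hji'))
  exact .inl ((hord j d).2 (h j hji hji'))

theorem dvd_of_le_of_forall_succ_dvd {k : ℕ} {n : Fin k → ℕ}
    (hdvd : ∀ i : Fin k, ∀ h : (i : ℕ) + 1 < k, n ⟨(i : ℕ) + 1, h⟩ ∣ n i) {i j : Fin k}
    (hij : i ≤ j) : n j ∣ n i := by
  obtain ⟨i, hi⟩ := i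
  obtain ⟨j, hj⟩ := j
  rw [Fin.mk_le_mk] at hij
  induction j, hij using Nat.le_induction with
  | base => rfl
  | succ j _ ih => exact (hdvd ⟨j, by omega⟩ hj).trans (ih (by omega))

/-- If a finite abelian group `ℤ_{n_1} ⊕ … ⊕ ℤ_{n_k}` (with `k ≥ 1`, each `n_i ≥ 2`,
`n_{i+1} ∣ n_i`) is `S_2`-capable, then `k ≥ 3` and `n_1 = n_2 = n_3`. -/
theorem s2Capable_finite_abelian_necessary (G : Type) [Group G]
    (k : ℕ) (hk : 1 ≤ k) (n : Fin k → ℕ)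
    (hn : ∀ i : Fin k, 2 ≤ n i)
    (hdvd : ∀ i : Fin k, ∀ h : (i : ℕ) + 1 < k, n ⟨(i : ℕ) + 1, h⟩ ∣ n i)
    (hG : Nonempty (G ≃* Multiplicative ((i : Fin k) → ZMod (n i))))
    (hcap : IsS2Capable G) :
    ∃ h : 3 ≤ k, n ⟨0, by omega⟩ = n ⟨1, by omega⟩ ∧ n ⟨1, by omega⟩ = n ⟨2, by omega⟩ := by
  obtain ⟨E, _, H, _, hH, ⟨eE⟩⟩ := hcap
  obtain ⟨eG⟩ := hG
  obtain ⟨t, hgen, hord⟩ := exists_lifts_of_mulEquiv_quotient (eG.symm.trans eE)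
  have hcomm := pcomm_mem_of_mulEquiv_quotient (eG.symm.trans eE)
  have key : ∀ {i i' : Fin k} {d : ℕ}, (∀ j, j ≠ i → j ≠ i' → n j ∣ d) → n i ∣ d :=
    dvd_of_forall_dvd_of_ne_of_ne hH hcomm hgen hord
  have chain : ∀ {i j : Fin k}, i ≤ j → n j ∣ n i := dvd_of_le_of_forall_succ_dvd hdvd
  have hk3 : 3 ≤ k := by
    by_contra! hk3
    have h01 : n ⟨0, hk⟩ ∣ 1 := key (i' := ⟨k - 1, by omega⟩) fun j hj hj' => by
      simp only [ne_eq, Fin.ext_iff] at hj hj'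
      omega
    have := hn ⟨0, hk⟩
    rw [Nat.dvd_one.mp h01] at this
    omega
  refine ⟨hk3, Nat.dvd_antisymm ?_ (chain (by simp)), Nat.dvd_antisymm ?_ (chain (by simp))⟩
  · refine key (i' := ⟨0, by omega⟩) fun j hj _ => chain ?_
    simp only [ne_eq, Fin.ext_iff, Fin.le_def] at hj ⊢
    omega
  · refine key (i' := ⟨0, by omega⟩) fun j hj hj' => chain ?_
    simp only [ne_eq, Fin.ext_iff, Fin.le_def] at hj hj' ⊢
    omega
end

section
/- Let G be an infinite finitely generated abelian group isomorphic to ℤ^(m) ⊕ ℤ_{n_1} ⊕ … ⊕ ℤ_{n_k}, where each n_i ≥ 2 and n_{i+1} divides n_i for all 1 ≤ i ≤ k−1. If m ≥ 3, then G is S_2-capable. -/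
/-!
Let `A` be an abelian group with additive maps `h j : A → R j` into rings that jointly detect
every element. For each `j` pick further additive maps `f j, g j` and let `π j v` be the
`5 × 5` matrix with superdiagonal `(f v, g v, f v, h v)`. The group `E` consists of pairs
`(v, U)` with `U j ≡ 1 + π j v` modulo matrices vanishing below the second superdiagonal.
Then `E ⧸ V*(E) ≅ A`:

* if `v = 0`, every `U j - 1` starts at the second superdiagonal, so `[g, a] - 1` starts at the
  third and `[p, q] - 1` at the second; their products vanish in size `5`, hence `[g, a]`
  centralizes all commutators, which makes `a` marginal;
* the `(0, 4)` entry of `[[X, Y], [Z, U]]` is a polynomial in the superdiagonals of `X, Y, Z, U`.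
  For lifts `X, Y` of elements with `(f, h) (x) = (1, 0)` and `(f, g, h) (y) = (0, 1, 0)`, the
  marginal identity `w(X, Y, X, a) = w(X, Y, X, 1) = 1` reads `h j a = 0`.

For `ℤ^m ⊕ ℤ_{n_1} ⊕ … ⊕ ℤ_{n_k}` every coordinate is such an `h`, with `f` and `g` two
free coordinates different from it. Since `f` is used twice, three free coordinates suffice.
-/

open Finset

namespace Matrix

section UpperBand

variable {R : Type} [Ring R] {d : ℕ}

def upperBand (c : ℕ) : AddSubgroup (Matrix (Fin d) (Fin d) R) where
  carrier := {M | ∀ i j : Fin d, (j : ℕ) < i + c → M i j = 0}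
  zero_mem' _ _ _ := rfl
  add_mem' hM hN i j hij := by simp [hM i j hij, hN i j hij]
  neg_mem' hM i j hij := by simp [hM i j hij]

variable {c c' : ℕ} {M N : Matrix (Fin d) (Fin d) R}

theorem upperBand_antitone (h : c' ≤ c) :
    (upperBand c : AddSubgroup (Matrix (Fin d) (Fin d) R)) ≤ upperBand c' :=
  fun _ hM i j hij => hM i j (by omega)

theorem one_mem_upperBand_zero : (1 : Matrix (Fin d) (Fin d) R) ∈ upperBand 0 :=
  fun _ _ hij => one_apply_ne (by rintro rfl; omega)

theorem single_mem_upperBand {i j : Fin d} (hij : (i : ℕ) + c ≤ j) (x : R) :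
    single i j x ∈ upperBand c :=
  fun _ _ h => single_apply_of_ne _ _ _ _ _ (by rintro ⟨rfl, rfl⟩; omega)

theorem mul_mem_upperBand (hM : M ∈ upperBand c) (hN : N ∈ upperBand c') :
    M * N ∈ upperBand (c + c') := by
  intro i j hij
  rw [mul_apply]
  refine sum_eq_zero fun l _ => ?_
  by_cases hl : (l : ℕ) < i + c
  · rw [hM i l hl, zero_mul]
  · rw [hN l j (by omega), mul_zero]

theorem lie_mem_upperBand (hM : M ∈ upperBand c) (hN : N ∈ upperBand c') :
    ⁅M, N⁆ ∈ upperBand (c + c') := by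
  rw [Ring.lie_def]
  exact sub_mem (mul_mem_upperBand hM hN) (add_comm c' c ▸ mul_mem_upperBand hN hM)

theorem pow_mem_upperBand (hM : M ∈ upperBand c) (k : ℕ) : M ^ k ∈ upperBand (c * k) := by
  induction k with
  | zero => exact one_mem_upperBand_zero
  | succ k ih => rw [pow_succ, Nat.mul_succ]; exact mul_mem_upperBand ih hM

theorem eq_zero_of_mem_upperBand (h : d ≤ c) (hM : M ∈ upperBand c) : M = 0 := by
  ext i j
  exact hM i j (by omega)

theorem isNilpotent_of_mem_upperBand_one (hM : M ∈ upperBand 1) : IsNilpotent M :=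
  ⟨d, eq_zero_of_mem_upperBand (by simp) (pow_mem_upperBand hM d)⟩

theorem apply_eq_of_sub_mem_upperBand (h : M - N ∈ upperBand c) {i j : Fin d}
    (hij : (j : ℕ) < i + c) : M i j = N i j :=
  sub_eq_zero.mp (h i j hij)

theorem mul_apply_of_mem_upperBand (hM : M ∈ upperBand c) (hN : N ∈ upperBand c')
    {i l k : Fin d} (hl : (l : ℕ) = i + c) (hk : (k : ℕ) = l + c') :
    (M * N) i k = M i l * N l k := by
  rw [mul_apply]
  refine sum_eq_single l (fun l' _ hne => ?_) (fun h => absurd (mem_univ l) h)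
  rcases lt_or_gt_of_ne (Fin.val_ne_of_ne hne) with h | h
  · rw [hM i l' (by omega), zero_mul]
  · rw [hN l' k (by omega), mul_zero]

theorem lie_apply_of_mem_upperBand_one (hM : M ∈ upperBand 1) (hN : N ∈ upperBand 1)
    {i l k : Fin d} (hl : (l : ℕ) = i + 1) (hk : (k : ℕ) = l + 1) :
    ⁅M, N⁆ i k = M i l * N l k - N i l * M l k := by
  rw [Ring.lie_def, sub_apply, mul_apply_of_mem_upperBand hM hN hl hk,
    mul_apply_of_mem_upperBand hN hM hl hk]

theorem exists_mul_one_add_eq_one {M : Matrix (Fin d) (Fin d) R} (hM : M ∈ upperBand 1) :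
    ∃ S ∈ upperBand 0, S * (1 + M) = 1 := by
  refine ⟨∑ i ∈ range d, (-M) ^ i, AddSubgroup.sum_mem _ fun i _ =>
    upperBand_antitone (Nat.zero_le _) (pow_mem_upperBand (neg_mem hM) i), ?_⟩
  rw [← sub_neg_eq_add, geom_sum_mul_neg,
    eq_zero_of_mem_upperBand (by omega) (pow_mem_upperBand (neg_mem hM) d), sub_zero]

variable {U V : (Matrix (Fin d) (Fin d) R)ˣ} {α β : ℕ}

theorem inv_sub_one_mem_upperBand (hc : 1 ≤ c)
    (hU : (U : Matrix (Fin d) (Fin d) R) - 1 ∈ upperBand c) :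
    (↑U⁻¹ : Matrix (Fin d) (Fin d) R) - 1 ∈ upperBand c := by
  obtain ⟨S, hS, hSU⟩ := exists_mul_one_add_eq_one (upperBand_antitone hc hU)
  rw [add_sub_cancel] at hSU
  rw [Units.inv_eq_of_mul_eq_one_left hSU,
    show S - 1 = -(S * (U - 1)) by rw [mul_sub, hSU]; noncomm_ring]
  simpa using neg_mem (mul_mem_upperBand hS hU)

theorem inv_sub_one_add_sub_one_mem_upperBand (hc : 1 ≤ c)
    (hU : (U : Matrix (Fin d) (Fin d) R) - 1 ∈ upperBand c) :
    (↑U⁻¹ : Matrix (Fin d) (Fin d) R) - 1 + (U - 1) ∈ upperBand (c + c) := by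
  rw [show (↑U⁻¹ : Matrix (Fin d) (Fin d) R) - 1 + (U - 1) = -((↑U⁻¹ - 1) * (U - 1)) by
    rw [show (↑U⁻¹ : Matrix (Fin d) (Fin d) R) - 1 + (U - 1) =
      ↑U⁻¹ * U - 1 - (↑U⁻¹ - 1) * (U - 1) by noncomm_ring, U.inv_mul, sub_self, zero_sub]]
  exact neg_mem (mul_mem_upperBand (inv_sub_one_mem_upperBand hc hU) hU)

theorem mul_sub_one_sub_add_mem_upperBand_two {P Q : Matrix (Fin d) (Fin d) R}
    (hP : P ∈ upperBand 1) (hQ : Q ∈ upperBand 1)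
    (hU : (U : Matrix (Fin d) (Fin d) R) - 1 - P ∈ upperBand 2)
    (hV : (V : Matrix (Fin d) (Fin d) R) - 1 - Q ∈ upperBand 2) :
    (↑(U * V) : Matrix (Fin d) (Fin d) R) - 1 - (P + Q) ∈ upperBand 2 := by
  have hU1 : (U : Matrix (Fin d) (Fin d) R) - 1 ∈ upperBand 1 := by
    simpa using add_mem (upperBand_antitone (by norm_num) hU) hP
  have hV1 : (V : Matrix (Fin d) (Fin d) R) - 1 ∈ upperBand 1 := by
    simpa using add_mem (upperBand_antitone (by norm_num) hV) hQ
  rw [Units.val_mul, show (U : Matrix (Fin d) (Fin d) R) * V - 1 - (P + Q) =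
    (U - 1 - P) + (V - 1 - Q) + (U - 1) * (V - 1) by noncomm_ring]
  exact add_mem (add_mem hU hV) (mul_mem_upperBand hU1 hV1)

theorem inv_sub_one_add_mem_upperBand_two {P : Matrix (Fin d) (Fin d) R}
    (hP : P ∈ upperBand 1) (hU : (U : Matrix (Fin d) (Fin d) R) - 1 - P ∈ upperBand 2) :
    (↑U⁻¹ : Matrix (Fin d) (Fin d) R) - 1 + P ∈ upperBand 2 := by
  have hU1 : (U : Matrix (Fin d) (Fin d) R) - 1 ∈ upperBand 1 := by
    simpa using add_mem (upperBand_antitone (by norm_num) hU) hP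
  rw [show (↑U⁻¹ : Matrix (Fin d) (Fin d) R) - 1 + P =
    (↑U⁻¹ - 1 + (U - 1)) - (U - 1 - P) by noncomm_ring]
  exact sub_mem (inv_sub_one_add_sub_one_mem_upperBand le_rfl hU1) hU

theorem commute_of_sub_one_mem_upperBand
    (hU : (U : Matrix (Fin d) (Fin d) R) - 1 ∈ upperBand α)
    (hV : (V : Matrix (Fin d) (Fin d) R) - 1 ∈ upperBand β) (h : d ≤ α + β) : Commute U V := by
  have hUV := eq_zero_of_mem_upperBand h (mul_mem_upperBand hU hV)
  have hVU := eq_zero_of_mem_upperBand (by omega) (mul_mem_upperBand hV hU)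
  refine Units.ext ?_
  rw [Units.val_mul, Units.val_mul,
    show (U : Matrix (Fin d) (Fin d) R) * V = 1 + (U - 1) + (V - 1) + (U - 1) * (V - 1) by
      noncomm_ring,
    show (V : Matrix (Fin d) (Fin d) R) * U = 1 + (V - 1) + (U - 1) + (V - 1) * (U - 1) by
      noncomm_ring, hUV, hVU]
  abel

theorem mul_mul_pcomm_sub_one (U V : (Matrix (Fin d) (Fin d) R)ˣ) :
    (V : Matrix (Fin d) (Fin d) R) * U * (pcomm U V - 1) =
      ⁅(U : Matrix (Fin d) (Fin d) R) - 1, (V : Matrix (Fin d) (Fin d) R) - 1⁆ := by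
  have h : V * U * pcomm U V = U * V := by unfold pcomm; group
  rw [Ring.lie_def, mul_sub, ← Units.val_mul, ← Units.val_mul, h, Units.val_mul, Units.val_mul]
  noncomm_ring

theorem mul_sub_one_mem_upperBand_one (hα : 1 ≤ α) (hβ : 1 ≤ β)
    (hU : (U : Matrix (Fin d) (Fin d) R) - 1 ∈ upperBand α)
    (hV : (V : Matrix (Fin d) (Fin d) R) - 1 ∈ upperBand β) :
    (V : Matrix (Fin d) (Fin d) R) * U - 1 ∈ upperBand 1 := by
  rw [show (V : Matrix (Fin d) (Fin d) R) * U - 1 = (U - 1) + (V - 1) + (V - 1) * (U - 1) by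
    noncomm_ring]
  exact add_mem (add_mem (upperBand_antitone hα hU) (upperBand_antitone hβ hV))
    (upperBand_antitone (by omega) (mul_mem_upperBand hV hU))

theorem pcomm_sub_one_mem_upperBand (hα : 1 ≤ α) (hβ : 1 ≤ β)
    (hU : (U : Matrix (Fin d) (Fin d) R) - 1 ∈ upperBand α)
    (hV : (V : Matrix (Fin d) (Fin d) R) - 1 ∈ upperBand β) :
    (↑(pcomm U V) : Matrix (Fin d) (Fin d) R) - 1 ∈ upperBand (α + β) := by
  obtain ⟨S, hS, hSVU⟩ :=
    exists_mul_one_add_eq_one (mul_sub_one_mem_upperBand_one hα hβ hU hV)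
  rw [add_sub_cancel] at hSVU
  rw [show (↑(pcomm U V) : Matrix (Fin d) (Fin d) R) - 1 = S * (V * U * (pcomm U V - 1)) by
    rw [← mul_assoc, hSVU, one_mul], mul_mul_pcomm_sub_one]
  simpa using mul_mem_upperBand hS (lie_mem_upperBand hU hV)

theorem pcomm_sub_one_sub_lie_mem_upperBand (hα : 1 ≤ α) (hβ : 1 ≤ β)
    (hU : (U : Matrix (Fin d) (Fin d) R) - 1 ∈ upperBand α)
    (hV : (V : Matrix (Fin d) (Fin d) R) - 1 ∈ upperBand β) :
    (↑(pcomm U V) : Matrix (Fin d) (Fin d) R) - 1 -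
      ⁅(U : Matrix (Fin d) (Fin d) R) - 1, (V : Matrix (Fin d) (Fin d) R) - 1⁆ ∈
        upperBand (α + β + 1) := by
  rw [← mul_mul_pcomm_sub_one, show ∀ W : Matrix (Fin d) (Fin d) R,
    W - V * U * W = -((V * U - 1) * W) from fun W => by noncomm_ring, add_comm]
  exact neg_mem (mul_mem_upperBand (mul_sub_one_mem_upperBand_one hα hβ hU hV)
    (pcomm_sub_one_mem_upperBand hα hβ hU hV))

end UpperBand

section FiveByFive

variable {R : Type} [Ring R]

theorem metaW_apply_zero_four {X Y Z U : (Matrix (Fin 5) (Fin 5) R)ˣ}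
    (hX : (X : Matrix (Fin 5) (Fin 5) R) - 1 ∈ upperBand 1)
    (hY : (Y : Matrix (Fin 5) (Fin 5) R) - 1 ∈ upperBand 1)
    (hZ : (Z : Matrix (Fin 5) (Fin 5) R) - 1 ∈ upperBand 1)
    (hU : (U : Matrix (Fin 5) (Fin 5) R) - 1 ∈ upperBand 1) :
    (↑(metaW X Y Z U) : Matrix (Fin 5) (Fin 5) R) 0 4 =
      ⁅(X : Matrix (Fin 5) (Fin 5) R) - 1, (Y : Matrix (Fin 5) (Fin 5) R) - 1⁆ 0 2 *
          ⁅(Z : Matrix (Fin 5) (Fin 5) R) - 1, (U : Matrix (Fin 5) (Fin 5) R) - 1⁆ 2 4 -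
        ⁅(Z : Matrix (Fin 5) (Fin 5) R) - 1, (U : Matrix (Fin 5) (Fin 5) R) - 1⁆ 0 2 *
          ⁅(X : Matrix (Fin 5) (Fin 5) R) - 1, (Y : Matrix (Fin 5) (Fin 5) R) - 1⁆ 2 4 := by
  have hC := pcomm_sub_one_mem_upperBand le_rfl le_rfl hX hY
  have hD := pcomm_sub_one_mem_upperBand le_rfl le_rfl hZ hU
  have hC' := pcomm_sub_one_sub_lie_mem_upperBand le_rfl le_rfl hX hY
  have hD' := pcomm_sub_one_sub_lie_mem_upperBand le_rfl le_rfl hZ hU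
  -- the error term of the outer commutator starts at the fifth superdiagonal, so it vanishes
  have hw := eq_zero_of_mem_upperBand le_rfl
    (pcomm_sub_one_sub_lie_mem_upperBand (by norm_num) (by norm_num) hC hD)
  rw [sub_eq_zero, sub_eq_iff_eq_add'] at hw
  rw [metaW, hw, add_apply, one_apply_ne (by decide), zero_add, Ring.lie_def, sub_apply,
    mul_apply_of_mem_upperBand hC hD (l := 2) rfl rfl,
    mul_apply_of_mem_upperBand hD hC (l := 2) rfl rfl,
    apply_eq_of_sub_mem_upperBand hC' (i := 0) (j := 2) (by decide),
    apply_eq_of_sub_mem_upperBand hC' (i := 2) (j := 4) (by decide),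
    apply_eq_of_sub_mem_upperBand hD' (i := 0) (j := 2) (by decide),
    apply_eq_of_sub_mem_upperBand hD' (i := 2) (j := 4) (by decide)]

end FiveByFive

end Matrix

section Marginal

variable {Γ : Type} [Group Γ]

theorem map_pcomm {Δ : Type} [Group Δ] (φ : Γ →* Δ) (a b : Γ) :
    φ (pcomm a b) = pcomm (φ a) (φ b) := by
  simp [pcomm]

theorem map_metaW {Δ : Type} [Group Δ] (φ : Γ →* Δ) (x y z u : Γ) :
    φ (metaW x y z u) = metaW (φ x) (φ y) (φ z) (φ u) := by
  simp [metaW, map_pcomm]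

theorem pcomm_one (a : Γ) : pcomm a 1 = 1 := by simp [pcomm]

theorem mem_commutatorSet_iff_exists_pcomm {T : Γ} :
    T ∈ commutatorSet Γ ↔ ∃ a b, pcomm a b = T := by
  refine ⟨fun ⟨a, b, hab⟩ => ⟨a⁻¹, b⁻¹, ?_⟩, fun ⟨a, b, hab⟩ => ⟨a⁻¹, b⁻¹, ?_⟩⟩ <;>
    simpa [pcomm, commutatorElement_def, mul_assoc] using hab

theorem pcomm_mem_commutatorSet (a b : Γ) : pcomm a b ∈ commutatorSet Γ :=
  mem_commutatorSet_iff_exists_pcomm.mpr ⟨a, b, rfl⟩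

theorem pcomm_mul_eq_of_mem_centralizer {T S z : Γ} (hT : T ∈ commutatorSet Γ)
    (hS : S ∈ commutatorSet Γ) (hz : z ∈ Subgroup.centralizer (commutatorSet Γ)) :
    pcomm (T * z) S = pcomm T S ∧ pcomm T (S * z) = pcomm T S := by
  rw [Subgroup.mem_centralizer_iff] at hz
  have hzT := hz T hT
  have hzS := hz S hS
  have hzTS := hz _ (pcomm_mem_commutatorSet T S)
  constructor
  · calc pcomm (T * z) S = z⁻¹ * (T⁻¹ * S⁻¹ * T * (z * S)) := by unfold pcomm; group
      _ = z⁻¹ * (pcomm T S * z) := by rw [← hzS]; unfold pcomm; group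
      _ = pcomm T S := by rw [hzTS]; group
  · calc pcomm T (S * z) = (z * T)⁻¹ * S⁻¹ * T * S * z := by unfold pcomm; group
      _ = z⁻¹ * (pcomm T S * z) := by rw [← hzT]; unfold pcomm; group
      _ = pcomm T S := by rw [hzTS]; group

theorem exists_pcomm_mul_left_eq {a : Γ}
    (ha : ∀ g, pcomm g a ∈ Subgroup.centralizer (commutatorSet Γ)) (x y : Γ) :
    ∃ z ∈ Subgroup.centralizer (commutatorSet Γ), pcomm (x * a) y = pcomm x y * z :=
  ⟨pcomm (pcomm x y) a * (pcomm y a)⁻¹, mul_mem (ha _) (inv_mem (ha y)), by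
    unfold pcomm; group⟩

theorem exists_pcomm_mul_right_eq {a : Γ}
    (ha : ∀ g, pcomm g a ∈ Subgroup.centralizer (commutatorSet Γ)) (x y : Γ) :
    ∃ z ∈ Subgroup.centralizer (commutatorSet Γ), pcomm x (y * a) = pcomm x y * z := by
  refine ⟨pcomm x a * pcomm (pcomm x y) a, mul_mem (ha x) (ha _), ?_⟩
  rw [← mul_assoc, Subgroup.mem_centralizer_iff.mp (ha x) _ (pcomm_mem_commutatorSet x y)]
  unfold pcomm; group

theorem mem_s2MarginalSet_of_pcomm_mem_centralizer {a : Γ}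
    (ha : ∀ g, pcomm g a ∈ Subgroup.centralizer (commutatorSet Γ)) :
    a ∈ s2MarginalSet Γ := by
  intro x y z u
  have hT := pcomm_mem_commutatorSet x y
  have hS := pcomm_mem_commutatorSet z u
  refine ⟨?_, ?_, ?_, ?_⟩
  · obtain ⟨c, hc, h⟩ := exists_pcomm_mul_left_eq ha x y
    rw [metaW, h, (pcomm_mul_eq_of_mem_centralizer hT hS hc).1]; rfl
  · obtain ⟨c, hc, h⟩ := exists_pcomm_mul_right_eq ha x y
    rw [metaW, h, (pcomm_mul_eq_of_mem_centralizer hT hS hc).1]; rfl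
  · obtain ⟨c, hc, h⟩ := exists_pcomm_mul_left_eq ha z u
    rw [metaW, h, (pcomm_mul_eq_of_mem_centralizer hT hS hc).2]; rfl
  · obtain ⟨c, hc, h⟩ := exists_pcomm_mul_right_eq ha z u
    rw [metaW, h, (pcomm_mul_eq_of_mem_centralizer hT hS hc).2]; rfl

end Marginal

theorem IsS2Capable.of_mulEquiv {G H : Type} [Group G] [Group H] (e : G ≃* H)
    (hH : IsS2Capable H) : IsS2Capable G := by
  obtain ⟨E, _, K, _, hK, ⟨e'⟩⟩ := hH
  exact ⟨E, _, K, _, hK, ⟨e.trans e'⟩⟩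

section ChainGroup

open Matrix

variable {A J : Type} [AddCommGroup A] {R : J → Type} [∀ j, Ring (R j)]
  (f g h : ∀ j, A →+ R j)

def chainMatrix (j : J) : A →+ Matrix (Fin 5) (Fin 5) (R j) :=
  (singleAddMonoidHom 0 1).comp (f j) + (singleAddMonoidHom 1 2).comp (g j) +
    (singleAddMonoidHom 2 3).comp (f j) + (singleAddMonoidHom 3 4).comp (h j)

theorem chainMatrix_mem_upperBand_one (j : J) (v : A) : chainMatrix f g h j v ∈ upperBand 1 := by
  simp only [chainMatrix, AddMonoidHom.add_apply, AddMonoidHom.comp_apply,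
    singleAddMonoidHom_apply]
  refine add_mem (add_mem (add_mem ?_ ?_) ?_) ?_ <;> exact single_mem_upperBand (by simp) _

def chainGroup : Subgroup (Multiplicative A × ((j : J) → (Matrix (Fin 5) (Fin 5) (R j))ˣ)) where
  carrier := {a | ∀ j,
    (a.2 j : Matrix (Fin 5) (Fin 5) (R j)) - 1 - chainMatrix f g h j a.1.toAdd ∈ upperBand 2}
  one_mem' j := by simp
  mul_mem' ha hb j := by
    simpa using mul_sub_one_sub_add_mem_upperBand_two (chainMatrix_mem_upperBand_one f g h j _)
      (chainMatrix_mem_upperBand_one f g h j _) (ha j) (hb j)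
  inv_mem' ha j := by
    simpa [sub_eq_add_neg] using
      inv_sub_one_add_mem_upperBand_two (chainMatrix_mem_upperBand_one f g h j _) (ha j)

variable {f g h}

noncomputable def chainLift (v : A) : chainGroup f g h :=
  ⟨(Multiplicative.ofAdd v, fun j =>
    (isNilpotent_of_mem_upperBand_one
      (chainMatrix_mem_upperBand_one f g h j v)).isUnit_one_add.unit),
    fun j => by simp⟩

def chainProj : chainGroup f g h →* Multiplicative A :=
  (MonoidHom.fst _ _).comp (chainGroup f g h).subtype

theorem chainProj_surjective : Function.Surjective (chainProj (f := f) (g := g) (h := h)) :=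
  fun v => ⟨chainLift v.toAdd, rfl⟩

def chainComponent (j : J) : chainGroup f g h →* (Matrix (Fin 5) (Fin 5) (R j))ˣ :=
  (Pi.evalMonoidHom _ j).comp ((MonoidHom.snd _ _).comp (chainGroup f g h).subtype)

theorem chainComponent_sub_one_sub_mem_upperBand_two (a : chainGroup f g h) (j : J) :
    (chainComponent j a : Matrix (Fin 5) (Fin 5) (R j)) - 1 -
      chainMatrix f g h j (chainProj a).toAdd ∈ upperBand 2 :=
  a.2 j

theorem chainComponent_sub_one_mem_upperBand_one (a : chainGroup f g h) (j : J) :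
    (chainComponent j a : Matrix (Fin 5) (Fin 5) (R j)) - 1 ∈ upperBand 1 := by
  simpa using add_mem
    (upperBand_antitone (by norm_num) (chainComponent_sub_one_sub_mem_upperBand_two a j))
    (chainMatrix_mem_upperBand_one f g h j (chainProj a).toAdd)

theorem chainComponent_chainLift (v : A) (j : J) :
    (chainComponent j (chainLift v : chainGroup f g h) : Matrix (Fin 5) (Fin 5) (R j)) =
      1 + chainMatrix f g h j v :=
  IsUnit.unit_spec _

theorem commute_of_forall_commute_chainComponent {a b : chainGroup f g h}
    (hab : ∀ j, Commute (chainComponent j a) (chainComponent j b)) : Commute a b :=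
  Subtype.ext (Prod.ext (mul_comm _ _) (funext fun j => (hab j).eq))

theorem mem_s2MarginalSet_of_chainProj_eq_one {a : chainGroup f g h} (ha : chainProj a = 1) :
    a ∈ s2MarginalSet (chainGroup f g h) := by
  refine mem_s2MarginalSet_of_pcomm_mem_centralizer fun b => Subgroup.mem_centralizer_iff.mpr ?_
  rintro _ hT
  obtain ⟨p, q, rfl⟩ := mem_commutatorSet_iff_exists_pcomm.mp hT
  refine (commute_of_forall_commute_chainComponent fun j => ?_).eq
  have ha2 : (chainComponent j a : Matrix (Fin 5) (Fin 5) (R j)) - 1 ∈ upperBand 2 := by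
    simpa [ha] using chainComponent_sub_one_sub_mem_upperBand_two a j
  rw [map_pcomm, map_pcomm]
  exact commute_of_sub_one_mem_upperBand
    (pcomm_sub_one_mem_upperBand le_rfl le_rfl (chainComponent_sub_one_mem_upperBand_one p j)
      (chainComponent_sub_one_mem_upperBand_one q j))
    (pcomm_sub_one_mem_upperBand le_rfl (by norm_num)
      (chainComponent_sub_one_mem_upperBand_one b j) ha2) (by norm_num)

theorem chainProj_eq_zero_of_mem_s2MarginalSet {a : chainGroup f g h}
    (ha : a ∈ s2MarginalSet (chainGroup f g h)) {j : J} {x y : A} (hfx : f j x = 1)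
    (hfy : f j y = 0) (hgy : g j y = 1) (hhx : h j x = 0) (hhy : h j y = 0) :
    h j (chainProj a).toAdd = 0 := by
  set X : chainGroup f g h := chainLift x
  set Y : chainGroup f g h := chainLift y
  have hw : metaW X Y X a = 1 := by
    simpa [metaW, pcomm_one] using (ha X Y X 1).2.2.2
  have hX := chainComponent_sub_one_mem_upperBand_one X j
  have hY := chainComponent_sub_one_mem_upperBand_one Y j
  have ha1 := chainComponent_sub_one_mem_upperBand_one a j
  have h04 := congrArg (fun w => (chainComponent j w : Matrix (Fin 5) (Fin 5) (R j)) 0 4) hw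
  simp only [map_metaW, map_one, Units.val_one, one_apply_ne (show (0 : Fin 5) ≠ 4 by decide)]
    at h04
  rw [metaW_apply_zero_four hX hY hX ha1,
    lie_apply_of_mem_upperBand_one hX hY (i := 0) (l := 1) (k := 2) rfl rfl,
    lie_apply_of_mem_upperBand_one hX hY (i := 2) (l := 3) (k := 4) rfl rfl,
    lie_apply_of_mem_upperBand_one hX ha1 (i := 2) (l := 3) (k := 4) rfl rfl,
    apply_eq_of_sub_mem_upperBand (chainComponent_sub_one_sub_mem_upperBand_two a j)
      (i := 3) (j := 4) (by decide)] at h04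
  simpa [X, Y, chainComponent_chainLift, chainMatrix, hfx, hfy, hgy, hhx, hhy] using h04

theorem coe_ker_chainProj (hinj : ∀ v, (∀ j, h j v = 0) → v = 0)
    (hwit : ∀ j, ∃ x y, f j x = 1 ∧ f j y = 0 ∧ g j y = 1 ∧ h j x = 0 ∧ h j y = 0) :
    ((chainProj (f := f) (g := g) (h := h)).ker : Set (chainGroup f g h)) =
      s2MarginalSet (chainGroup f g h) := by
  ext a
  refine ⟨mem_s2MarginalSet_of_chainProj_eq_one, fun ha => ?_⟩
  refine toAdd_eq_zero.mp (hinj _ fun j => ?_)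
  obtain ⟨x, y, hfx, hfy, hgy, hhx, hhy⟩ := hwit j
  exact chainProj_eq_zero_of_mem_s2MarginalSet ha hfx hfy hgy hhx hhy

end ChainGroup

theorem isS2Capable_multiplicative {A J : Type} [AddCommGroup A] {R : J → Type}
    [∀ j, Ring (R j)] (h : ∀ j, A →+ R j) (hinj : ∀ v, (∀ j, h j v = 0) → v = 0)
    (hwit : ∀ j, ∃ (f g : A →+ R j) (x y : A),
      f x = 1 ∧ f y = 0 ∧ g y = 1 ∧ h j x = 0 ∧ h j y = 0) :
    IsS2Capable (Multiplicative A) := by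
  choose f g hfg using hwit
  exact ⟨chainGroup f g h, inferInstance, chainProj.ker, inferInstance,
    coe_ker_chainProj hinj hfg,
    ⟨(QuotientGroup.quotientKerEquivOfSurjective _ chainProj_surjective).symm⟩⟩

section FinitelyGeneratedAbelian

variable {m k : ℕ} {n : Fin k → ℕ}

-- `ZMod 0` is `ℤ`, so the free coordinates and the torsion coordinates form one family.
def fgCoord (m : ℕ) (n : Fin k → ℕ) (j : Fin m ⊕ Fin k) :
    ((Fin m → ℤ) × ((i : Fin k) → ZMod (n i))) →+ ZMod (Sum.elim (fun _ => 0) n j) :=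
  match j with
  | .inl t => (Int.castAddHom (ZMod 0)).comp ((Pi.evalAddMonoidHom _ t).comp (AddMonoidHom.fst _ _))
  | .inr i => (Pi.evalAddMonoidHom _ i).comp (AddMonoidHom.snd _ _)

theorem eq_zero_of_forall_fgCoord_eq_zero (v : (Fin m → ℤ) × ((i : Fin k) → ZMod (n i)))
    (hv : ∀ j, fgCoord m n j v = 0) : v = 0 :=
  Prod.ext (funext fun t => hv (.inl t)) (funext fun i => hv (.inr i))

theorem Fin.exists_two_ne_of_three_le (hm : 3 ≤ m) (t : Fin m) :
    ∃ s s' : Fin m, s ≠ s' ∧ s ≠ t ∧ s' ≠ t := by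
  have hcard : 1 < (univ.erase t).card := by
    rw [card_erase_of_mem (mem_univ t), card_univ, Fintype.card_fin]
    omega
  obtain ⟨s, hs, s', hs', hss'⟩ := one_lt_card.mp hcard
  exact ⟨s, s', hss', ne_of_mem_erase hs, ne_of_mem_erase hs'⟩

theorem exists_fgCoord_witnesses (hm : 3 ≤ m) (j : Fin m ⊕ Fin k) :
    ∃ (f g : ((Fin m → ℤ) × ((i : Fin k) → ZMod (n i))) →+
        ZMod (Sum.elim (fun _ => 0) n j))
      (x y : (Fin m → ℤ) × ((i : Fin k) → ZMod (n i))),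
      f x = 1 ∧ f y = 0 ∧ g y = 1 ∧ fgCoord m n j x = 0 ∧ fgCoord m n j y = 0 := by
  obtain ⟨s, s', hss', hs, hs'⟩ :=
    Fin.exists_two_ne_of_three_le hm (j.elim id fun _ => ⟨0, by omega⟩)
  let ev (r : Fin m) :
      ((Fin m → ℤ) × ((i : Fin k) → ZMod (n i))) →+ ZMod (Sum.elim (fun _ => 0) n j) :=
    (Int.castAddHom _).comp ((Pi.evalAddMonoidHom _ r).comp (AddMonoidHom.fst _ _))
  refine ⟨ev s, ev s', (Pi.single s 1, 0), (Pi.single s' 1, 0), ?_, ?_, ?_, ?_, ?_⟩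
  · simp [ev]
  · simp [ev, hss']
  · simp [ev]
  · rcases j with t | i
    · exact Pi.single_eq_of_ne (Ne.symm hs) _
    · rfl
  · rcases j with t | i
    · exact Pi.single_eq_of_ne (Ne.symm hs') _
    · rfl

end FinitelyGeneratedAbelian

theorem s2Capable_infinite_fg_abelian_sufficient_general (G : Type) [Group G]
    (m k : ℕ) (n : Fin k → ℕ)
    (hG : Nonempty (G ≃* Multiplicative ((Fin m → ℤ) × ((i : Fin k) → ZMod (n i)))))
    (hm : 3 ≤ m) :
    IsS2Capable G := by
  obtain ⟨e⟩ := hG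
  exact (isS2Capable_multiplicative (fgCoord m n) eq_zero_of_forall_fgCoord_eq_zero
    (exists_fgCoord_witnesses hm)).of_mulEquiv e

/-- If an infinite finitely generated abelian group `ℤ^(m) ⊕ ℤ_{n_1} ⊕ … ⊕ ℤ_{n_k}`
(each `n_i ≥ 2`, `n_{i+1} ∣ n_i`) has `m ≥ 3`, then it is `S_2`-capable. -/
theorem s2Capable_infinite_fg_abelian_sufficient (G : Type) [Group G]
    (m k : ℕ) (n : Fin k → ℕ)
    (hn : ∀ i : Fin k, 2 ≤ n i)
    (hdvd : ∀ i : Fin k, ∀ h : (i : ℕ) + 1 < k, n ⟨(i : ℕ) + 1, h⟩ ∣ n i)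
    (hG : Nonempty (G ≃* Multiplicative ((Fin m → ℤ) × ((i : Fin k) → ZMod (n i)))))
    (hm : 3 ≤ m) :
    IsS2Capable G :=
  s2Capable_infinite_fg_abelian_sufficient_general G m k n hG hm
end
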